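/- arXiv:2102.07809 — 10 statements merged into one kernel-verified Lean document; each statement's English description precedes it below -/
import Mathlib

section
/- Let α ∈ (1/2, 1), φ ∈ (0, 1), and let k ≥ 2 be an integer. Define p̂ₖ = (φ(1−α) + (1−φ)(1 − αᵏ)) / (φ + (1−φ)(2 − αᵏ − (1−α)ᵏ)) and p̂′ₖ = (φα + (1−φ)αᵏ) / (φ + (1−φ)(αᵏ + (1−α)ᵏ)). Then 1 − α < p̂ₖ < 1/2 < α < p̂′ₖ. -/
lemma aux_pow (α : ℝ) (h1 : 1/2 < α) (h2 : α < 1) :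
    ∀ m : ℕ, α^(m+3) - (1-α)^(m+3) < 2*α - 1 := by
  intro m
  induction m with
  | zero =>
      norm_num
      nlinarith [mul_pos (show (0:ℝ)<α by linarith) (mul_pos (show (0:ℝ)<2*α-1 by linarith) (show (0:ℝ)<1-α by linarith))]
  | succ n ih =>
      have hA : (0:ℝ) ≤ α^(n+3) := by positivity
      have hB0 : (0:ℝ) ≤ (1-α)^(n+3) := pow_nonneg (by linarith) _
      have hB : (1-α)^(n+3) ≤ 1-α :=
        pow_le_of_le_one (by linarith) (by linarith) (by omega)
      have e1 : α^(n+1+3) = α^(n+3) * α := by ring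
      have e2 : (1-α)^(n+1+3) = (1-α)^(n+3) * (1-α) := by ring
      rw [e1, e2]
      nlinarith [mul_lt_mul_of_pos_left ih (by linarith : (0:ℝ) < α)]

theorem stmt_4 (α φ : ℝ) (k : ℕ) (hα : 1/2 < α ∧ α < 1) (hφ : 0 < φ ∧ φ < 1)
    (hk : 2 ≤ k) :
    1 - α < (φ * (1 - α) + (1 - φ) * (1 - α^k)) /
              (φ + (1 - φ) * (2 - α^k - (1 - α)^k)) ∧
    (φ * (1 - α) + (1 - φ) * (1 - α^k)) /
      (φ + (1 - φ) * (2 - α^k - (1 - α)^k)) < 1/2 ∧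
    (1:ℝ)/2 < α ∧
    α < (φ * α + (1 - φ) * α^k) / (φ + (1 - φ) * (α^k + (1 - α)^k)) := by
  obtain ⟨hα1, hα2⟩ := hα
  obtain ⟨hφ1, hφ2⟩ := hφ
  obtain ⟨m, rfl⟩ : ∃ m, k = m + 2 := ⟨k - 2, by omega⟩
  have hαpos : (0:ℝ) < α := by linarith
  have h1α : (0:ℝ) < 1 - α := by linarith
  have ha0 : (0:ℝ) < α^(m+2) := by positivity
  have hb0 : (0:ℝ) < (1-α)^(m+2) := by positivity
  have ha1 : α^(m+2) < 1 := pow_lt_one₀ (by linarith) hα2 (by omega)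
  have hb1 : (1-α)^(m+2) < 1 := pow_lt_one₀ (by linarith) (by linarith) (by omega)
  have hba : (1-α)^(m+1) < α^(m+1) :=
    pow_lt_pow_left₀ (by linarith) (by linarith) (by omega)
  have ea : α^(m+2) = α^(m+1) * α := by ring
  have eb : (1-α)^(m+2) = (1-α)^(m+1) * (1-α) := by ring
  -- key fact 1: α^(m+3) - (1-α)^(m+3) < 2α - 1
  have key1 := aux_pow α hα1 hα2 m
  have ea3 : α^(m+3) = α^(m+2) * α := by ring
  have eb3 : (1-α)^(m+3) = (1-α)^(m+2) * (1-α) := by ring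
  rw [ea3, eb3] at key1
  -- key fact 2: α * (1-α)^(m+2) < (1-α) * α^(m+2)
  have key2 : α * (1-α)^(m+2) < (1-α) * α^(m+2) := by
    rw [ea, eb]
    nlinarith [mul_pos hαpos h1α, hba]
  have hD : (0:ℝ) < φ + (1 - φ) * (2 - α^(m+2) - (1 - α)^(m+2)) := by nlinarith
  have hD' : (0:ℝ) < φ + (1 - φ) * (α^(m+2) + (1 - α)^(m+2)) := by nlinarith
  refine ⟨?_, ?_, hα1, ?_⟩
  · rw [lt_div_iff₀ hD]
    nlinarith [mul_pos (sub_pos.2 hφ2) (sub_pos.2 key1)]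
  · rw [div_lt_iff₀ hD]
    nlinarith [mul_pos (sub_pos.2 hφ2) (sub_pos.2 key2), mul_pos hφ1 (show (0:ℝ) < 2*α - 1 by linarith)]
  · rw [lt_div_iff₀ hD']
    nlinarith [mul_pos (sub_pos.2 hφ2) (sub_pos.2 key2)]
end

section
/- Let α ∈ (1/2, 1) and φ ∈ (0, 1). For integer k ≥ 2 define p̂ₖ = (φ(1−α) + (1−φ)(1 − αᵏ)) / (φ + (1−φ)(2 − αᵏ − (1−α)ᵏ)). Then the sequence k ↦ p̂ₖ is strictly increasing: for every k ≥ 2, p̂ₖ < p̂ₖ₊₁. -/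
theorem stmt_5 (α φ : ℝ) (hα : 1/2 < α ∧ α < 1) (hφ : 0 < φ ∧ φ < 1)
    (phat : ℕ → ℝ)
    (hphat : ∀ k : ℕ, phat k =
      (φ * (1 - α) + (1 - φ) * (1 - α^k)) /
        (φ + (1 - φ) * (2 - α^k - (1 - α)^k))) :
    ∀ k : ℕ, 2 ≤ k → phat k < phat (k + 1) := by
  obtain ⟨hα1, hα2⟩ := hα
  obtain ⟨hφ1, hφ2⟩ := hφ
  intro k hk
  have h1α : 0 < 1 - α := by linarith
  have hαpos : 0 < α := by linarith
  have hba : 1 - α < α := by linarith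
  have hpow : (1-α)^(k-1) < α^(k-1) := pow_lt_pow_left₀ hba (le_of_lt h1α) (by omega)
  have hak : α^k = α^(k-1) * α := by rw [← pow_succ]; congr 1; omega
  have hbk : (1-α)^k = (1-α)^(k-1) * (1-α) := by rw [← pow_succ]; congr 1; omega
  have hapos : 0 < α^k := pow_pos hαpos k
  have hbpos : 0 < (1-α)^k := pow_pos h1α k
  have ha1 : α^k < 1 := pow_lt_one₀ (le_of_lt hαpos) hα2 (by omega)
  have hb1 : (1-α)^k < 1 := pow_lt_one₀ (le_of_lt h1α) (by linarith) (by omega)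
  have hab : (1-α)^k < α^k := pow_lt_pow_left₀ hba (le_of_lt h1α) (by omega)
  have key : (1-α)^k * α < α^k * (1-α) := by
    rw [hak, hbk]
    nlinarith [mul_pos (mul_pos hαpos h1α) (sub_pos.mpr hpow)]
  have hsucc_a : α^(k+1) = α^k * α := pow_succ α k
  have hsucc_b : (1-α)^(k+1) = (1-α)^k * (1-α) := pow_succ (1-α) k
  have hD1 : 0 < φ + (1-φ) * (2 - α^k - (1-α)^k) := by nlinarith
  have hD2 : 0 < φ + (1-φ) * (2 - α^(k+1) - (1-α)^(k+1)) := by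
    rw [hsucc_a, hsucc_b]
    nlinarith [mul_lt_mul_of_pos_left hα2 hapos, mul_lt_mul_of_pos_left (show 1-α < 1 by linarith) hbpos]
  have hN : 0 < φ * (1 - α) + (1 - φ) * (1 - α^k) := by nlinarith
  have hM : 0 < φ * α + (1 - φ) * (1 - (1-α)^k) := by nlinarith
  have hMN : φ * (1 - α) + (1 - φ) * (1 - α^k) < φ * α + (1 - φ) * (1 - (1-α)^k) := by
    nlinarith
  rw [hphat k, hphat (k+1), div_lt_div_iff₀ hD1 hD2, hsucc_a, hsucc_b]
  nlinarith [mul_pos (mul_pos hαpos hbpos) (sub_pos.mpr hMN),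
    mul_lt_mul_of_pos_right key hM,
    mul_pos hN hM, mul_pos hapos hbpos]
end

section
/- Let α ∈ (1/2, 1), φ ∈ (0, 1), and p ∈ (0, 1/2). Then ((1 + (1−α)(1−φ))·α·p) / (α·p + (1−α)·(1−p) + α·(1−α)·(1−φ)) < (α·p) / (α·p + (1−α)·(1−p)). -/
theorem stmt_6 (α φ p : ℝ) (hα : 1/2 < α ∧ α < 1) (hφ : 0 < φ ∧ φ < 1)
    (hp : 0 < p ∧ p < 1/2) :
    ((1 + (1 - α) * (1 - φ)) * α * p) /
      (α * p + (1 - α) * (1 - p) + α * (1 - α) * (1 - φ)) <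
    (α * p) / (α * p + (1 - α) * (1 - p)) := by
  obtain ⟨h1, h2⟩ := hα
  obtain ⟨h3, h4⟩ := hφ
  obtain ⟨h5, h6⟩ := hp
  have hα0 : 0 < α := by linarith
  have hc : 0 < (1 - α) * (1 - φ) := mul_pos (by linarith) (by linarith)
  have hD : 0 < α * p + (1 - α) * (1 - p) := by nlinarith
  have hD2 : 0 < α * p + (1 - α) * (1 - p) + α * (1 - α) * (1 - φ) := by
    have := mul_pos hα0 hc; nlinarith
  rw [div_lt_div_iff₀ hD2 hD]
  have key : 0 < α * p * ((1 - α) * (1 - φ)) * ((1 - p) * (2 * α - 1)) :=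
    mul_pos (mul_pos (mul_pos hα0 h5) hc) (mul_pos (by linarith) (by linarith))
  nlinarith [key]
end

section
/- Let α ∈ (1/2, 1), φ ∈ (0, 1), and p ∈ (0, 1/2). Then [αφ(1−p) + α²(1−φ)(1−p)] / [(1−α)φp + αφ(1−p) + (1−α)²(1−φ)p + α²(1−φ)(1−p)] > ((1−p)·α) / (p·(1−α) + (1−p)·α). -/
theorem stmt_8 (α φ p : ℝ) (hα : 1/2 < α ∧ α < 1) (hφ : 0 < φ ∧ φ < 1)
    (hp : 0 < p ∧ p < 1/2) :
    (α * φ * (1 - p) + α^2 * (1 - φ) * (1 - p)) /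
      ((1 - α) * φ * p + α * φ * (1 - p) + (1 - α)^2 * (1 - φ) * p +
        α^2 * (1 - φ) * (1 - p)) >
    ((1 - p) * α) / (p * (1 - α) + (1 - p) * α) := by
  obtain ⟨ha1, ha2⟩ := hα
  obtain ⟨hf1, hf2⟩ := hφ
  obtain ⟨hp1, hp2⟩ := hp
  have hα0 : 0 < α := by linarith
  have h1α : 0 < 1 - α := by linarith
  have h1p : 0 < 1 - p := by linarith
  have h1f : 0 < 1 - φ := by linarith
  have hd1 : 0 < (1 - α) * φ * p + α * φ * (1 - p) + (1 - α)^2 * (1 - φ) * p +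
        α^2 * (1 - φ) * (1 - p) := by positivity
  have hd2 : 0 < p * (1 - α) + (1 - p) * α := by positivity
  rw [gt_iff_lt, div_lt_div_iff₀ hd2 hd1]
  have key : 0 < α * (1 - p) * (p * (1 - φ) * (1 - α) * (2*α - 1)) := by
    have h2a : 0 < 2*α - 1 := by linarith
    positivity
  nlinarith [key]
end

section
/- Let α ∈ (1/2, 1), φ ∈ (0, 1), p ∈ (0, 1), and let k ≥ 2 be an integer. Then [αφ(1−p) + αᵏ(1−φ)(1−p)] / [(1−α)φp + αφ(1−p) + (1−α)ᵏ(1−φ)p + αᵏ(1−φ)(1−p)] > ((1−p)·α) / (p·(1−α) + (1−p)·α). -/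
theorem stmt_9 (α φ p : ℝ) (k : ℕ) (hα : 1/2 < α ∧ α < 1) (hφ : 0 < φ ∧ φ < 1)
    (hp : 0 < p ∧ p < 1) (hk : 2 ≤ k) :
    (α * φ * (1 - p) + α^k * (1 - φ) * (1 - p)) /
      ((1 - α) * φ * p + α * φ * (1 - p) + (1 - α)^k * (1 - φ) * p +
        α^k * (1 - φ) * (1 - p)) >
    ((1 - p) * α) / (p * (1 - α) + (1 - p) * α) := by
  obtain ⟨hα1, hα2⟩ := hα
  obtain ⟨hφ1, hφ2⟩ := hφ
  obtain ⟨hp1, hp2⟩ := hp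
  have h0α : 0 < α := by linarith
  have h1α : 0 < 1 - α := by linarith
  have h1p : 0 < 1 - p := by linarith
  have h1φ : 0 < 1 - φ := by linarith
  have hlt : 1 - α < α := by linarith
  obtain ⟨j, rfl⟩ : ∃ j, k = j + 1 := ⟨k - 1, by omega⟩
  have hj : 1 ≤ j := by omega
  have hpowj : (1 - α)^j < α^j :=
    pow_lt_pow_left₀ hlt (le_of_lt h1α) (by omega)
  have hkey : α * (1 - α)^(j+1) < α^(j+1) * (1 - α) := by
    have : α * ((1 - α) * (1 - α)^j) < α * ((1 - α) * α^j) := by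
      apply mul_lt_mul_of_pos_left _ h0α
      exact mul_lt_mul_of_pos_left hpowj h1α
    calc α * (1 - α)^(j+1) = α * ((1 - α) * (1 - α)^j) := by ring
      _ < α * ((1 - α) * α^j) := this
      _ = α^(j+1) * (1 - α) := by ring
  have hpowα : 0 < α^(j+1) := pow_pos h0α _
  have hpow1α : 0 < (1 - α)^(j+1) := pow_pos h1α _
  have hB : 0 < (1 - α) * φ * p + α * φ * (1 - p) + (1 - α)^(j+1) * (1 - φ) * p +
      α^(j+1) * (1 - φ) * (1 - p) := by positivity
  have hD : 0 < p * (1 - α) + (1 - p) * α := by positivity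
  rw [gt_iff_lt, div_lt_div_iff₀ hD hB]
  have hcoef : 0 < (1 - φ) * (1 - p) * p := by positivity
  nlinarith [mul_lt_mul_of_pos_left hkey hcoef]
end

section
/- Let α ∈ (1/2, 1), φ ∈ (0, 1), let k ≥ 2 be an integer, define p**ₖ = (α − αᵏ) / (1 − αᵏ − (1−α)ᵏ), and let p ∈ (0, p**ₖ). Then (α·p − (1−α)·(1−p)) − (φ·(α·p − (1−α)·(1−p)) + (1−φ)·((1 − (1−α)ᵏ)·p − (1 − αᵏ)·(1−p))) = (1−φ)·((α − αᵏ)·(1−p) − ((1−α) − (1−α)ᵏ)·p), and this quantity is strictly positive. -/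
theorem stmt_11 (α φ p : ℝ) (k : ℕ) (hα : 1/2 < α ∧ α < 1) (hφ : 0 < φ ∧ φ < 1)
    (hk : 2 ≤ k)
    (hp : 0 < p ∧ p < (α - α^k) / (1 - α^k - (1 - α)^k)) :
    (α * p - (1 - α) * (1 - p)) -
      (φ * (α * p - (1 - α) * (1 - p)) +
        (1 - φ) * ((1 - (1 - α)^k) * p - (1 - α^k) * (1 - p))) =
    (1 - φ) * ((α - α^k) * (1 - p) - ((1 - α) - (1 - α)^k) * p) ∧
    0 < (1 - φ) * ((α - α^k) * (1 - p) - ((1 - α) - (1 - α)^k) * p) := by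
  obtain ⟨hα1, hα2⟩ := hα
  obtain ⟨hφ1, hφ2⟩ := hφ
  obtain ⟨hp1, hp2⟩ := hp
  have h0 : (0:ℝ) < α := by linarith
  have hb : (0:ℝ) < 1 - α := by linarith
  have h1 : α ^ k ≤ α ^ 2 := pow_le_pow_of_le_one (le_of_lt h0) (le_of_lt hα2) hk
  have h2 : α ^ 2 < α := by nlinarith
  have h3 : (1 - α) ^ k ≤ (1 - α) ^ 2 :=
    pow_le_pow_of_le_one (le_of_lt hb) (by linarith) hk
  have h4 : (1 - α) ^ 2 < 1 - α := by nlinarith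
  have hD : 0 < 1 - α ^ k - (1 - α) ^ k := by linarith
  have hpd : p * (1 - α ^ k - (1 - α) ^ k) < α - α ^ k :=
    (lt_div_iff₀ hD).mp hp2
  constructor
  · ring
  · have : 0 < (α - α ^ k) * (1 - p) - ((1 - α) - (1 - α) ^ k) * p := by nlinarith
    have h5 : 0 < 1 - φ := by linarith
    positivity
end

section
/- Let α ∈ (1/2, 1). For integer k ≥ 2 define p**ₖ = (α − αᵏ) / (1 − αᵏ − (1−α)ᵏ). Then for every k ≥ 2: (i) 1/2 ≤ p**ₖ < α, with p**₂ = 1/2; (ii) p**ₖ < p**ₖ₊₁ (the sequence is strictly increasing in k); and (iii) p**ₖ → α as k → ∞. -/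
/-!
Write `β = 1 - α`, so `β < α` and `α + β = 1`. The numerator of `p**ₖ` falls short of `α` times its
denominator by `αβ (α^(k-1) - β^(k-1)) > 0`, which gives `p**ₖ < α`, and `p**ₖ ≥ 1/2` amounts to
`αᵏ - βᵏ ≤ α - β`. Cross-multiplying `p**ₖ < p**ₖ₊₁` (with `k = m + 2`) leaves
`α²β² ((αᵐ - βᵐ) + αᵐβᵐ (α - β)) > 0`. Since `αᵏ, βᵏ → 0`, `p**ₖ → α / 1`.
-/

open Filter Topology

noncomputable def threshold (α : ℝ) (k : ℕ) : ℝ :=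
  (α - α ^ k) / (1 - α ^ k - (1 - α) ^ k)

lemma pow_sub_pow_le_sub {a b : ℝ} (hb : 0 ≤ b) (hba : b ≤ a) (hab : a + b ≤ 1) :
    ∀ {k : ℕ}, 1 ≤ k → a ^ k - b ^ k ≤ a - b
  | 1, _ => le_of_eq (by ring)
  | k + 2, _ => by
    have ih : a ^ (k + 1) - b ^ (k + 1) ≤ a - b := pow_sub_pow_le_sub hb hba hab (by omega)
    have hbk : b ^ (k + 1) ≤ b := pow_le_of_le_one hb (by linarith) (by omega)
    have ha : 0 ≤ a := hb.trans hba
    calc a ^ (k + 2) - b ^ (k + 2) = a * (a ^ (k + 1) - b ^ (k + 1)) + b ^ (k + 1) * (a - b) := by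
          ring
      _ ≤ a * (a - b) + b * (a - b) := by gcongr
      _ = (a + b) * (a - b) := by ring
      _ ≤ a - b := by nlinarith

section threshold

variable {α : ℝ}

lemma threshold_denom_pos (h0 : 0 < α) (h1 : α < 1) {k : ℕ} (hk : 2 ≤ k) :
    0 < 1 - α ^ k - (1 - α) ^ k := by
  have hα : α ^ k < α := pow_lt_self_of_lt_one₀ h0 h1 (by omega)
  have hβ : (1 - α) ^ k < 1 - α := pow_lt_self_of_lt_one₀ (by linarith) (by linarith) (by omega)
  linarith

lemma threshold_two (h0 : 0 < α) (h1 : α < 1) : threshold α 2 = 1 / 2 := by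
  rw [threshold, div_eq_iff (threshold_denom_pos h0 h1 le_rfl).ne']
  ring

lemma half_le_threshold (hα : 1 / 2 ≤ α) (h1 : α < 1) {k : ℕ} (hk : 2 ≤ k) :
    1 / 2 ≤ threshold α k := by
  rw [threshold, le_div_iff₀ (threshold_denom_pos (by linarith) h1 hk)]
  have := pow_sub_pow_le_sub (a := α) (b := 1 - α) (by linarith) (by linarith) (by linarith)
    (k := k) (by omega)
  linarith

lemma threshold_lt (hα : 1 / 2 < α) (h1 : α < 1) {k : ℕ} (hk : 2 ≤ k) : threshold α k < α := by
  rw [threshold, div_lt_iff₀ (threshold_denom_pos (by linarith) h1 hk)]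
  obtain ⟨m, rfl⟩ : ∃ m, k = m + 1 + 1 := ⟨k - 2, by omega⟩
  have hpow : (1 - α) ^ (m + 1) < α ^ (m + 1) := by gcongr; linarith
  have hαβ : 0 < α * (1 - α) := mul_pos (by linarith) (by linarith)
  have hgap : α * (1 - α ^ (m + 1 + 1) - (1 - α) ^ (m + 1 + 1)) - (α - α ^ (m + 1 + 1)) =
      α * (1 - α) * (α ^ (m + 1) - (1 - α) ^ (m + 1)) := by
    ring
  nlinarith [mul_pos hαβ (sub_pos.mpr hpow)]

lemma threshold_lt_threshold_succ (hα : 1 / 2 < α) (h1 : α < 1) {k : ℕ} (hk : 2 ≤ k) :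
    threshold α k < threshold α (k + 1) := by
  rw [threshold, threshold, div_lt_div_iff₀ (threshold_denom_pos (by linarith) h1 hk)
    (threshold_denom_pos (by linarith) h1 (by omega))]
  obtain ⟨m, rfl⟩ : ∃ m, k = m + 2 := ⟨k - 2, by omega⟩
  have hpow : 0 ≤ α ^ m - (1 - α) ^ m := sub_nonneg.mpr (by gcongr; linarith)
  have hαβ : 0 < α ^ 2 * (1 - α) ^ 2 := by positivity
  have hprod : 0 < α ^ m * (1 - α) ^ m * (2 * α - 1) :=
    mul_pos (mul_pos (pow_pos (by linarith) m) (pow_pos (by linarith) m)) (by linarith)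
  have hcross : (α - α ^ (m + 2 + 1)) * (1 - α ^ (m + 2) - (1 - α) ^ (m + 2))
        - (α - α ^ (m + 2)) * (1 - α ^ (m + 2 + 1) - (1 - α) ^ (m + 2 + 1))
      = α ^ 2 * (1 - α) ^ 2 * ((α ^ m - (1 - α) ^ m) + α ^ m * (1 - α) ^ m * (2 * α - 1)) := by
    ring
  nlinarith [mul_pos hαβ (add_pos_of_nonneg_of_pos hpow hprod)]

lemma tendsto_threshold (h0 : 0 < α) (h1 : α < 1) : Tendsto (threshold α) atTop (𝓝 α) := by
  have hα : Tendsto (α ^ ·) atTop (𝓝 0) := tendsto_pow_atTop_nhds_zero_of_lt_one h0.le h1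
  have hβ : Tendsto ((1 - α) ^ ·) atTop (𝓝 0) :=
    tendsto_pow_atTop_nhds_zero_of_lt_one (by linarith) (by linarith)
  have hlim : Tendsto (threshold α) atTop (𝓝 ((α - 0) / (1 - 0 - 0))) :=
    (tendsto_const_nhds.sub hα).div ((tendsto_const_nhds.sub hα).sub hβ) (by norm_num)
  simpa using hlim

end threshold

theorem stmt_12 (α : ℝ) (hα : 1/2 < α ∧ α < 1)
    (pss : ℕ → ℝ)
    (hpss : ∀ k : ℕ, pss k = (α - α^k) / (1 - α^k - (1 - α)^k)) :
    (∀ k : ℕ, 2 ≤ k → 1/2 ≤ pss k ∧ pss k < α) ∧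
    pss 2 = 1/2 ∧
    (∀ k : ℕ, 2 ≤ k → pss k < pss (k + 1)) ∧
    Filter.Tendsto pss Filter.atTop (nhds α) := by
  obtain ⟨hhalf, hone⟩ := hα
  have hpos : 0 < α := by linarith
  obtain rfl : pss = threshold α := funext hpss
  exact ⟨fun k hk => ⟨half_le_threshold hhalf.le hone hk, threshold_lt hhalf hone hk⟩,
    threshold_two hpos hone, fun k hk => threshold_lt_threshold_succ hhalf hone hk,
    tendsto_threshold hpos hone⟩
end

section
/- Let α ∈ (1/2, 1), φ ∈ (0, 1), p ∈ (0, 1/2), and let k ≥ 2 be an integer. Then (1−φ)·((α − αᵏ⁺¹)·(1−p) − ((1−α) − (1−α)ᵏ⁺¹)·p) > (1−φ)·((α − αᵏ)·(1−p) − ((1−α) − (1−α)ᵏ)·p); that is, the College's payoff advantage of the 'Report All' first-score equilibrium over the 'Report Max' separating equilibrium strictly increases with the number of available tests k. -/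
theorem stmt_13 (α φ p : ℝ) (k : ℕ) (hα : 1/2 < α ∧ α < 1) (hφ : 0 < φ ∧ φ < 1)
    (hp : 0 < p ∧ p < 1/2) (hk : 2 ≤ k) :
    (1 - φ) * ((α - α^(k+1)) * (1 - p) - ((1 - α) - (1 - α)^(k+1)) * p) >
    (1 - φ) * ((α - α^k) * (1 - p) - ((1 - α) - (1 - α)^k) * p) := by
  obtain ⟨hα1, hα2⟩ := hα
  obtain ⟨hφ1, hφ2⟩ := hφ
  obtain ⟨hp1, hp2⟩ := hp
  obtain ⟨m, rfl⟩ : ∃ m, k = m + 2 := ⟨k - 2, by omega⟩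
  have hb : (0:ℝ) < 1 - α := by linarith
  have ha : (0:ℝ) < α := by linarith
  have hlt : 1 - α < α := by linarith
  have h1 : (1 - α)^(m+1) < α^(m+1) := pow_lt_pow_left₀ hlt (le_of_lt hb) (by omega)
  have h2 : (0:ℝ) < (1 - α)^(m+1) := pow_pos hb _
  have h3 : (0:ℝ) < α^(m+1) := pow_pos ha _
  have e1 : α^(m+2) = α^(m+1) * α := pow_succ α (m+1)
  have e2 : α^(m+3) = α^(m+1) * α * α := by rw [pow_succ, pow_succ]
  have e3 : (1-α)^(m+2) = (1-α)^(m+1) * (1-α) := pow_succ _ _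
  have e4 : (1-α)^(m+3) = (1-α)^(m+1) * (1-α) * (1-α) := by rw [pow_succ, pow_succ]
  rw [e1, e2, e3, e4]
  have key : (1-α)^(m+1) * p < α^(m+1) * (1-p) := by
    calc (1-α)^(m+1) * p < α^(m+1) * p := by
          exact mul_lt_mul_of_pos_right h1 hp1
    _ < α^(m+1) * (1-p) := by
          apply mul_lt_mul_of_pos_left (by linarith) h3
  have pos : (0:ℝ) < (1 - φ) * (α * (1 - α)) * (α^(m+1) * (1-p) - (1-α)^(m+1) * p) := by
    apply mul_pos (mul_pos (by linarith) (mul_pos ha hb)) (by linarith)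
  nlinarith [pos]
end

section
/- Let α ∈ (1/2, 1) and let k ≥ 2 be an integer. Then (α^{k−1}·(1−α)) / (α^{k−1}·(1−α) + (1−α)^{k−1}·α) ≤ α if and only if k ∈ {2, 3}; moreover the expression equals 1/2 when k = 2 and equals α when k = 3. -/
theorem stmt_17 (α : ℝ) (hα : 1/2 < α ∧ α < 1) :
    (∀ k : ℕ, 2 ≤ k →
      ((α^(k-1) * (1 - α)) / (α^(k-1) * (1 - α) + (1 - α)^(k-1) * α) ≤ α ↔
        k = 2 ∨ k = 3)) ∧
    (α^(2-1) * (1 - α)) / (α^(2-1) * (1 - α) + (1 - α)^(2-1) * α) = 1/2 ∧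
    (α^(3-1) * (1 - α)) / (α^(3-1) * (1 - α) + (1 - α)^(3-1) * α) = α := by
  obtain ⟨hl, hr⟩ := hα
  have h0 : 0 < α := by linarith
  have h1 : 0 < 1 - α := by linarith
  refine ⟨?_, ?_, ?_⟩
  · intro k hk
    obtain ⟨n, rfl⟩ : ∃ n, k = n + 2 := ⟨k - 2, by omega⟩
    have hsimp : n + 2 - 1 = n + 1 := rfl
    rw [hsimp]
    have hD : 0 < α^(n+1) * (1 - α) + (1 - α)^(n+1) * α := by positivity
    rw [div_le_iff₀ hD]
    constructor
    · intro h
      by_contra hne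
      push_neg at hne
      have hn : 2 ≤ n := by omega
      have key : (1-α)^(n-1) < α^(n-1) :=
        pow_lt_pow_left₀ (by linarith) (le_of_lt h1) (by omega)
      have h2 : (1-α)^n * α < α^n * (1-α) := by
        have e3 : (1-α)^n = (1-α)^(n-1) * (1-α) := by
          rw [← pow_succ]; congr 1; omega
        have e4 : α^n = α^(n-1) * α := by
          rw [← pow_succ]; congr 1; omega
        rw [e3, e4]
        have := mul_lt_mul_of_pos_right key (mul_pos h1 h0)
        nlinarith [this]
      have e1 : α^(n+1) = α^n * α := pow_succ α n
      have e2 : (1-α)^(n+1) = (1-α)^n * (1-α) := pow_succ _ n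
      rw [e1, e2] at h
      have h3 := mul_lt_mul_of_pos_right h2 (mul_pos h0 h1)
      nlinarith [h3]
    · intro h
      have hn : n = 0 ∨ n = 1 := by omega
      rcases hn with rfl | rfl
      · have hp : (0:ℝ) < α * (1-α) * (2*α-1) :=
          mul_pos (mul_pos h0 h1) (by linarith)
        norm_num
        nlinarith [hp]
      · norm_num
        nlinarith [sq_nonneg α]
  · rw [div_eq_iff (by positivity)]; ring
  · rw [div_eq_iff (by positivity)]; ring
end

section
/- Let α ∈ (1/2, 1) and φ ∈ (0, 1). Define p̂ = (1 + α(1−φ)) / (1/(1−α) + 2α(1−φ)) and q = (α·(1−α)·(1−φ) + (1−α)) / (α·(1−α)·(1−φ) + 1). Then p̂ < min{1/2, q}; in particular, the threshold p̂̂ = min{1/2, q} below which a reject-all equilibrium exists under 'Report Max' with two tests satisfies p̂ < p̂̂ ≤ 1/2. -/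
theorem stmt_18 (α φ : ℝ) (hα : 1/2 < α ∧ α < 1) (hφ : 0 < φ ∧ φ < 1) :
    (1 + α * (1 - φ)) / (1 / (1 - α) + 2 * α * (1 - φ)) <
      min (1/2)
        ((α * (1 - α) * (1 - φ) + (1 - α)) / (α * (1 - α) * (1 - φ) + 1)) := by
  obtain ⟨h1, h2⟩ := hα
  obtain ⟨h3, h4⟩ := hφ
  have hβ : 0 < 1 - α := by linarith
  have hu : (1 - α) * (1 / (1 - α)) = 1 := by field_simp
  have hupos : 0 < 1 / (1 - α) := by positivity
  have hat : 0 < α * (1 - φ) := by nlinarith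
  have hd1 : 0 < 1 / (1 - α) + 2 * α * (1 - φ) := by nlinarith
  have hd2 : 0 < α * (1 - α) * (1 - φ) + 1 := by nlinarith
  refine lt_min ?_ ?_
  · rw [div_lt_iff₀ hd1]
    nlinarith [mul_pos hat hβ]
  · rw [div_lt_div_iff₀ hd1 hd2]
    nlinarith [mul_pos hat hβ, mul_pos (mul_pos hat hβ) hat, mul_pos (mul_pos hat hat) hβ, hu, mul_pos hat hupos]
end
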